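/- arXiv:1509.02911 — 6 statements merged into one kernel-verified Lean document; each statement's English description precedes it below -/
import Mathlib

section
/- In every execution of the online collaborative caching algorithm, after each request has been fully processed, the potential of every node satisfies p(k) ≤ f_k for all nodes k, where p(k) = Σ_{v∈V} max(d(W,v) − d(k,v), 0), V is the multiset of requests processed so far, and W is the current cache set. -/
open Finset

/-- The setting of the online collaborative caching problem: a finite set `X` of nodes
(base stations together with the root `r` representing the Internet), a pseudometric
UA-cost `d` satisfying the triangle inequality, and nonnegative caching costs `f`
with `f r = 0` (the root always holds the content). -/
structure CachingSetting (X : Type*) [Fintype X] where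
  d : X → X → ℝ
  f : X → ℝ
  r : X
  d_nonneg : ∀ x y, 0 ≤ d x y
  d_self : ∀ x, d x x = 0
  d_symm : ∀ x y, d x y = d y x
  d_triangle : ∀ x y z, d x z ≤ d x y + d y z
  f_nonneg : ∀ k, 0 ≤ f k
  f_root : f r = 0

namespace CachingSetting

variable {X : Type*} [Fintype X] [DecidableEq X] (S : CachingSetting X)

/-- UA cost of serving a request at `v` from the nearest node of the cache set `W`:
`D W v = min_{k ∈ W} d k v`. -/
noncomputable def D (W : Finset X) (v : X) : ℝ :=
  if h : W.Nonempty then W.inf' h (fun k => S.d k v) else 0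

/-- Potential of node `k` with respect to the cache set `W` and the first `j`
requests of the request sequence `v`:
`pot v W j k = ∑_{i < j} max(D W (v i) − d k (v i), 0)`. -/
noncomputable def pot (v : ℕ → X) (W : Finset X) (j : ℕ) (k : X) : ℝ :=
  ∑ i ∈ Finset.range j, max (S.D W (v i) - S.d k (v i)) 0

/-- One step of the online algorithm on request `v i`, turning the cache set `W`
into `W'`.  After updating the potentials (they become the potentials with respect
to `W` and the first `i + 1` requests), either all potentials are at most the caching
costs and no new cache is opened, or the content is cached at a maximizer `w` of
`p(k) − f k` with `p(w) − f w > 0`. -/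
def Step (v : ℕ → X) (i : ℕ) (W W' : Finset X) : Prop :=
  ((∀ k, S.pot v W (i + 1) k ≤ S.f k) ∧ W' = W) ∨
    (∃ w, (∀ k, S.pot v W (i + 1) k - S.f k ≤ S.pot v W (i + 1) w - S.f w) ∧
      S.f w < S.pot v W (i + 1) w ∧ W' = insert w W)

/-- `IsExecution S n v Ws` says that `Ws j` is the cache set maintained by the online
algorithm after fully processing the first `j` of the `n` requests `v 0, v 1, …`
(initially the cache set is `{r}`); ties may be broken arbitrarily. -/
def IsExecution (n : ℕ) (v : ℕ → X) (Ws : ℕ → Finset X) : Prop :=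
  Ws 0 = {S.r} ∧ ∀ i < n, S.Step v i (Ws i) (Ws (i + 1))

end CachingSetting

/-- Lemma 1 of the paper: in every execution of the online collaborative caching
algorithm, after each request has been fully processed the potential of every node
satisfies `p(k) ≤ f k`, the potentials being taken with respect to the current cache
set and the multiset of requests processed so far. -/
theorem caching_potential_invariant {X : Type*} [Fintype X] [DecidableEq X]
    (S : CachingSetting X) (n : ℕ) (v : ℕ → X) (Ws : ℕ → Finset X)
    (hexec : S.IsExecution n v Ws) :
    ∀ j ≤ n, ∀ k : X, S.pot v (Ws j) j k ≤ S.f k := by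
  obtain ⟨hW0, hstep⟩ := hexec
  -- the cache set is always nonempty
  have hne : ∀ j, j ≤ n → (Ws j).Nonempty := by
    intro j
    induction j with
    | zero => intro _; rw [hW0]; exact ⟨S.r, mem_singleton_self _⟩
    | succ j ih =>
      intro hj
      rcases hstep j (by omega) with ⟨_, hW⟩ | ⟨w, _, _, hW⟩
      · rw [hW]; exact ih (by omega)
      · rw [hW]; exact Finset.insert_nonempty _ _
  intro j
  induction j with
  | zero =>
    intro _ k
    simp only [CachingSetting.pot, Finset.range_zero, Finset.sum_empty]
    exact S.f_nonneg k
  | succ j ih =>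
    intro hj k
    have hWne : (Ws j).Nonempty := hne j (by omega)
    rcases hstep j (by omega) with ⟨hall, hW⟩ | ⟨w, hmax, hfw, hW⟩
    · rw [hW]; exact hall k
    · rw [hW]
      set W := Ws j with hWdef
      set a := S.D W (v j) with ha
      set b := S.d w (v j) with hb
      set c := S.d k (v j) with hc
      have hDins : ∀ u : X, S.D (insert w W) u = min (S.d w u) (S.D W u) := by
        intro u
        simp only [CachingSetting.D, dif_pos hWne, dif_pos (Finset.insert_nonempty _ _)]
        rw [Finset.inf'_insert]
      have hpotins : ∀ m : ℕ, S.pot v (insert w W) m k ≤ S.pot v W m k := by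
        intro m
        apply Finset.sum_le_sum
        intro i _
        apply max_le_max _ le_rfl
        apply sub_le_sub_right
        rw [hDins]
        exact min_le_right _ _
      have hsucc : ∀ (U : Finset X) (u : X),
          S.pot v U (j + 1) u = S.pot v U j u + max (S.D U (v j) - S.d u (v j)) 0 := by
        intro U u
        simp only [CachingSetting.pot, Finset.sum_range_succ]
      rw [hsucc, hDins]
      by_cases hmin : min b a ≤ c
      · have h0 : max (min b a - c) 0 = 0 := max_eq_right (by linarith)
        rw [h0, add_zero]
        exact le_trans (hpotins j) (ih (by omega) k)
      · push_neg at hmin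
        have hca : c < a := lt_of_lt_of_le hmin (min_le_right _ _)
        have hcb : c < b := lt_of_lt_of_le hmin (min_le_left _ _)
        have hminmax : min b a = a - max (a - b) 0 := by
          rcases le_total b a with h | h
          · rw [min_eq_left h, max_eq_left (by linarith)]; ring
          · rw [min_eq_right h, max_eq_right (by linarith)]; ring
        have hmaxac : max (a - c) 0 = a - c := max_eq_left (by linarith)
        have hmaxmin : max (min b a - c) 0 = min b a - c :=
          max_eq_left (by linarith)
        have h2 := hmax k
        rw [hsucc W k, hsucc W w, hmaxac] at h2
        have h3 : S.pot v W j w ≤ S.f w := ih (by omega) w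
        have h1 := hpotins j
        rw [hmaxmin, hminmax]
        linarith
end

section
/- In every execution of the online collaborative caching algorithm, suppose the invariant p(k) ≤ f_k holds for all nodes k just before a request v arrives (with potentials p taken with respect to the current cache set W and the previously processed requests). If processing v causes the content to be cached at a new node w, then d(w,v) < d(W,v); consequently d(W ∪ {w}, v) = d(w,v), i.e., the request v is served from the newly opened cache w. -/
open Finset

/-- In every execution of the online algorithm, suppose the invariant `p(k) ≤ f k`
holds for all nodes just before the request `v i` arrives (potentials taken with
respect to the current cache set `W` and the previously processed requests
`v 0, …, v (i-1)`).  If processing `v i` causes the content to be cached at a new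
node `w` (i.e. `w` maximizes the updated potential minus the caching cost, and this
difference is positive), then `d(w, v i) < d(W, v i)`, and consequently
`d(W ∪ {w}, v i) = d(w, v i)`: the request is served from the newly opened cache. -/
theorem caching_new_cache_serves_request {X : Type*} [Fintype X] [DecidableEq X]
    (S : CachingSetting X) (W : Finset X) (hW : W.Nonempty) (i : ℕ) (v : ℕ → X)
    (hinv : ∀ k : X, S.pot v W i k ≤ S.f k)
    (w : X)
    (hmax : ∀ k : X, S.pot v W (i + 1) k - S.f k ≤ S.pot v W (i + 1) w - S.f w)
    (hpos : S.f w < S.pot v W (i + 1) w) :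
    S.d w (v i) < S.D W (v i) ∧ S.D (insert w W) (v i) = S.d w (v i) := by
  have hsplit : S.pot v W (i + 1) w
      = S.pot v W i w + max (S.D W (v i) - S.d w (v i)) 0 := by
    simp [CachingSetting.pot, Finset.sum_range_succ]
  have hmaxpos : 0 < max (S.D W (v i) - S.d w (v i)) 0 := by
    have := hinv w
    nlinarith [hpos, hsplit]
  have hlt : S.d w (v i) < S.D W (v i) := by
    rcases max_cases (S.D W (v i) - S.d w (v i)) 0 with ⟨h1, _⟩ | ⟨h1, _⟩ <;>
      [linarith [hmaxpos, h1]; linarith [hmaxpos, h1]]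
  refine ⟨hlt, ?_⟩
  have hD : S.D (insert w W) (v i) = min (S.d w (v i)) (S.D W (v i)) := by
    have hne : (insert w W).Nonempty := ⟨w, Finset.mem_insert_self w W⟩
    simp only [CachingSetting.D, dif_pos hW, dif_pos hne]
    exact Finset.inf'_insert hW (fun k => S.d k (v i))
  rw [hD, min_eq_left hlt.le]
end

section
/- Let (X,d) be a pseudometric space, let W ⊆ X be a nonempty finite set, let V and C be finite multisets of points of X, let c ∈ X, and let f ≥ 0 be a real number. If Σ_{v∈V} max(d(W,v) − d(c,v), 0) ≤ f, then |V ∩ C| · d(W,c) ≤ f + 2 · Σ_{v∈C} d(c,v), where |V ∩ C| denotes the number of requests of V that belong to C and d(W,x) := min_{k∈W} d(k,x). -/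
/-!
For every `v ∈ C` the triangle inequality gives `d(W,c) - 2 d(c,v) ≤ max(d(W,v) - d(c,v), 0)`.
Summing over the requests of `V ∩ C`, and then over all of `V` (the summands are nonnegative),
bounds `|V ∩ C| · d(W,c) - 2 Σ_{v ∈ V ∩ C} d(c,v)` by the potential, hence by `f`.
-/

theorem Multiset.sum_map_le_sum_map_of_le {ι α : Type*} [AddCommMonoid α] [PartialOrder α]
    [IsOrderedAddMonoid α] {s t : Multiset ι} (g : ι → α) (hst : s ≤ t)
    (hg : ∀ x ∈ t, 0 ≤ g x) : (s.map g).sum ≤ (t.map g).sum := by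
  obtain ⟨u, rfl⟩ := Multiset.le_iff_exists_add.mp hst
  rw [Multiset.map_add, Multiset.sum_add]
  exact le_add_of_nonneg_right <| Multiset.sum_nonneg fun _ hx =>
    let ⟨x, hxu, hgx⟩ := Multiset.mem_map.mp hx
    hgx ▸ hg x (Multiset.mem_add.mpr (Or.inr hxu))

theorem Finset.inf'_dist_le_inf'_dist_add {X : Type*} [PseudoMetricSpace X] (W : Finset X)
    (hW : W.Nonempty) (x y : X) :
    W.inf' hW (fun k => dist k x) ≤ W.inf' hW (fun k => dist k y) + dist x y :=
  sub_le_iff_le_add.mp <| Finset.le_inf' hW _ fun k hk => by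
    linarith [Finset.inf'_le (fun k => dist k x) hk, dist_triangle k y x, dist_comm x y]

theorem caching_corollary1_general {X : Type*} [PseudoMetricSpace X] [DecidableEq X]
    (W : Finset X) (hW : W.Nonempty) (V C : Multiset X) (c : X) (f : ℝ)
    (hpot : (V.map fun v => max (W.inf' hW (fun k => dist k v) - dist c v) 0).sum ≤ f) :
    ((V ∩ C).card : ℝ) * W.inf' hW (fun k => dist k c) ≤
      f + 2 * (C.map fun v => dist c v).sum := by
  set D := W.inf' hW (fun k => dist k c)
  set g : X → ℝ := fun v => max (W.inf' hW (fun k => dist k v) - dist c v) 0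
  have hD_le_g : ∀ v, D - 2 * dist c v ≤ g v := fun v =>
    le_max_of_le_left (by linarith [W.inf'_dist_le_inf'_dist_add hW c v])
  have hC : ((V ∩ C).map fun v => dist c v).sum ≤ (C.map fun v => dist c v).sum :=
    Multiset.sum_map_le_sum_map_of_le _ Multiset.inter_le_right fun _ _ => dist_nonneg
  have hVC : ((V ∩ C).card : ℝ) * D - 2 * ((V ∩ C).map fun v => dist c v).sum ≤ f :=
    calc ((V ∩ C).card : ℝ) * D - 2 * ((V ∩ C).map fun v => dist c v).sum
        = ((V ∩ C).map fun v => D - 2 * dist c v).sum := by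
          rw [Multiset.sum_map_sub, Multiset.sum_map_mul_left, Multiset.map_const',
            Multiset.sum_replicate, nsmul_eq_mul]
      _ ≤ ((V ∩ C).map g).sum := Multiset.sum_map_le_sum_map _ _ fun v _ => hD_le_g v
      _ ≤ (V.map g).sum :=
          Multiset.sum_map_le_sum_map_of_le g Multiset.inter_le_left fun _ _ => le_max_right _ _
      _ ≤ f := hpot
  linarith

/-- Corollary 1 of the paper in abstract form.  `(X, dist)` is a pseudometric space,
`W` is the (nonempty, finite) set of caches, `V` is the multiset of requests processed
so far, `C` is an optimal cluster with cache location `c` and caching cost `f`.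
If the potential invariant `∑_{v ∈ V} max(d(W,v) − d(c,v), 0) ≤ f` holds, then
`|V ∩ C| · d(W,c) ≤ f + 2 · ∑_{v ∈ C} d(c,v)`, where `d(W,x) = min_{k ∈ W} dist k x`
and `|V ∩ C|` is the number of requests of `V` belonging to `C`. -/
theorem caching_corollary1 {X : Type*} [PseudoMetricSpace X] [DecidableEq X]
    (W : Finset X) (hW : W.Nonempty) (V C : Multiset X) (c : X) (f : ℝ) (hf : 0 ≤ f)
    (hpot : (V.map fun v => max (W.inf' hW (fun k => dist k v) - dist c v) 0).sum ≤ f) :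
    ((V ∩ C).card : ℝ) * W.inf' hW (fun k => dist k c) ≤
      f + 2 * (C.map fun v => dist c v).sum :=
  caching_corollary1_general W hW V C c f hpot
end

section
/- In every execution of the online collaborative caching algorithm on a request sequence v_1, …, v_n (n ≥ 1), and for every nonempty finite set W* ⊆ X containing the root r, the total UA cost paid by the algorithm satisfies Σ_{j=1}^n d(W_{v_j}, v_j) ≤ log₂(n+1) · Σ_{w∈W*} f_w + (2·log₂(n+1) + 1) · Σ_{j=1}^n d(W*, v_j), where W_{v_j} denotes the cache set at the time request v_j is assigned. -/
/-!
Cluster the requests by their nearest point of `W*`. Choosing each new cache as a maximiser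
of `p - f` keeps every potential below the caching cost. If the `t`-th request of the cluster
of `x` finds the current caches at distance `D` from `x`, the triangle inequality shows that
`x` has collected potential at least `t * D - 2 * (offline UA cost of the cluster)`, so
`D ≤ (f x + 2 * cost) / t`; summing over the cluster gives a harmonic number, which is at most
`log₂ (n + 1)`. One more triangle inequality, from `x` to the request, adds the offline UA cost
once more.
-/

open Finset

theorem harmonic_le_logb_two (m : ℕ) : (harmonic m : ℝ) ≤ Real.logb 2 (m + 1) := by
  induction m with
  | zero => simp
  | succ m ih =>
    have hm : (0 : ℝ) < m + 1 := by positivity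
    have hstep : ((m + 1 : ℝ))⁻¹ ≤ Real.logb 2 ((m + 1 + 1) / (m + 1)) := by
      rw [Real.le_logb_iff_rpow_le one_lt_two (by positivity)]
      calc (2 : ℝ) ^ ((m + 1 : ℝ))⁻¹ = (1 + 1) ^ ((m + 1 : ℝ))⁻¹ := by norm_num
        _ ≤ 1 + ((m + 1 : ℝ))⁻¹ * 1 :=
          rpow_one_add_le_one_add_mul_self (by norm_num) (by positivity)
            (inv_le_one_of_one_le₀ (by linarith [m.cast_nonneg (α := ℝ)]))
        _ = (m + 1 + 1) / (m + 1) := by field_simp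
    rw [Real.logb_div (by positivity) hm.ne'] at hstep
    push_cast [harmonic_succ]
    linarith

theorem sum_le_mul_harmonic {α : Type*} [LinearOrder α] (C : Finset α) (A : α → ℝ) (K : ℝ)
    (h : ∀ j ∈ C, #{i ∈ C | i ≤ j} * A j ≤ K) :
    ∑ j ∈ C, A j ≤ K * harmonic #C := by
  classical
  induction C using Finset.induction_on_max with
  | empty => simp
  | insert a s ha ih =>
    have has : a ∉ s := fun h => lt_irrefl a (ha a h)
    have hprefix : ∀ j ∈ s, {i ∈ insert a s | i ≤ j} = {i ∈ s | i ≤ j} := fun j hj => by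
      rw [filter_insert, if_neg (ha j hj).not_ge]
    have hall : {i ∈ insert a s | i ≤ a} = insert a s :=
      filter_true_of_mem fun i hi => (mem_insert.1 hi).elim le_of_eq fun h => (ha i h).le
    have hs := ih fun j hj => by simpa [hprefix j hj] using h j (mem_insert_of_mem hj)
    have hA : (#s + 1 : ℝ) * A a ≤ K := by
      simpa [hall, card_insert_of_notMem has] using h a (mem_insert_self a s)
    rw [sum_insert has, card_insert_of_notMem has]
    push_cast [harmonic_succ]
    have : A a ≤ K * (#s + 1 : ℝ)⁻¹ := by
      rw [← div_eq_mul_inv, le_div_iff₀ (by positivity)]; linarith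
    linarith

theorem max_min_sub_le (a b c : ℝ) :
    max (min a b - c) 0 ≤ max (max (b - c) 0 - max (b - a) 0) 0 := by
  grind

namespace CachingSetting

variable {X : Type*} [Fintype X] (S : CachingSetting X)

section Distance

variable {W : Finset X}

theorem D_eq_inf' (hW : W.Nonempty) (v : X) : S.D W v = W.inf' hW (S.d · v) :=
  dif_pos hW

theorem D_nonneg (W : Finset X) (v : X) : 0 ≤ S.D W v := by
  unfold D
  split_ifs with hW
  · exact le_inf' hW _ fun k _ => S.d_nonneg k v
  · exact le_rfl

theorem D_le_d {k : X} (hk : k ∈ W) (v : X) : S.D W v ≤ S.d k v := by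
  rw [S.D_eq_inf' ⟨k, hk⟩]
  exact inf'_le _ hk

theorem exists_mem_d_eq_D (hW : W.Nonempty) (v : X) : ∃ k ∈ W, S.d k v = S.D W v := by
  obtain ⟨k, hk, hkv⟩ := exists_mem_eq_inf' hW (S.d · v)
  exact ⟨k, hk, by rw [S.D_eq_inf' hW, hkv]⟩

theorem D_le_D_add_d (hW : W.Nonempty) (u v : X) : S.D W v ≤ S.D W u + S.d u v := by
  obtain ⟨k, hk, hku⟩ := S.exists_mem_d_eq_D hW u
  calc S.D W v ≤ S.d k v := S.D_le_d hk v
    _ ≤ S.d k u + S.d u v := S.d_triangle k u v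
    _ = S.D W u + S.d u v := by rw [hku]

theorem D_insert [DecidableEq X] (hW : W.Nonempty) (w u : X) :
    S.D (insert w W) u = min (S.d w u) (S.D W u) := by
  rw [S.D_eq_inf' (insert_nonempty w W), S.D_eq_inf' hW, inf'_insert]

end Distance

section Potential

variable (v : ℕ → X)

theorem pot_succ (W : Finset X) (j : ℕ) (k : X) :
    S.pot v W (j + 1) k = S.pot v W j k + max (S.D W (v j) - S.d k (v j)) 0 :=
  sum_range_succ _ _

theorem pot_insert_le [DecidableEq X] {W : Finset X} (hW : W.Nonempty) (w : X) (j : ℕ) (k : X) :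
    S.pot v (insert w W) j k ≤ S.pot v W j k := by
  refine sum_le_sum fun i _ => max_le_max (sub_le_sub_right ?_ _) le_rfl
  rw [S.D_insert hW]
  exact min_le_right _ _

theorem card_mul_D_sub_le_pot {W : Finset X} (hW : W.Nonempty) {T : Finset ℕ} {j : ℕ}
    (hT : T ⊆ range j) (x : X) :
    #T * S.D W x - 2 * ∑ i ∈ T, S.d x (v i) ≤ S.pot v W j x := by
  rw [mul_sum, ← nsmul_eq_mul, ← sum_const, ← sum_sub_distrib]
  refine (sum_le_sum fun i _ => ?_).trans
    (sum_le_sum_of_subset_of_nonneg hT fun i _ _ => le_max_right _ _)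
  have := S.D_le_D_add_d hW (v i) x
  rw [S.d_symm (v i) x] at this
  exact le_max_of_le_left (by linarith)

end Potential

section Execution

variable [DecidableEq X] {v : ℕ → X}

theorem Step.nonempty {i : ℕ} {W W' : Finset X} (h : S.Step v i W W') (hW : W.Nonempty) :
    W'.Nonempty := by
  rcases h with ⟨-, rfl⟩ | ⟨w, -, -, rfl⟩
  exacts [hW, insert_nonempty w W]

theorem Step.pot_le {i : ℕ} {W W' : Finset X} (h : S.Step v i W W') (hW : W.Nonempty)
    (hpot : ∀ k, S.pot v W i k ≤ S.f k) (k : X) : S.pot v W' (i + 1) k ≤ S.f k := by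
  rcases h with ⟨hle, rfl⟩ | ⟨w, hmax, -, rfl⟩
  · exact hle k
  have hk := hmax k
  rw [S.pot_succ, S.pot_succ] at hk
  have hgain : max (max (S.D W (v i) - S.d k (v i)) 0 - max (S.D W (v i) - S.d w (v i)) 0) 0
      ≤ S.f k - S.pot v W i k :=
    max_le (by linarith [hpot w]) (sub_nonneg.2 (hpot k))
  rw [S.pot_succ, S.D_insert hW]
  -- The new cache `w` raises the last term of `k`'s potential by at most
  -- `(D - d k)⁺ - (D - d w)⁺`, which the maximality of `w` bounds by the slack of `k`.
  linarith [S.pot_insert_le v hW w i k,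
    max_min_sub_le (S.d w (v i)) (S.D W (v i)) (S.d k (v i))]

theorem IsExecution.nonempty_and_pot_le {n : ℕ} {Ws : ℕ → Finset X}
    (h : S.IsExecution n v Ws) {j : ℕ} (hj : j ≤ n) :
    (Ws j).Nonempty ∧ ∀ k, S.pot v (Ws j) j k ≤ S.f k := by
  induction j with
  | zero => exact ⟨h.1 ▸ singleton_nonempty S.r, fun k => by simpa [pot] using S.f_nonneg k⟩
  | succ j ih =>
    obtain ⟨hne, hpot⟩ := ih (by omega)
    have hstep := h.2 j (by omega)
    exact ⟨hstep.nonempty S hne, hstep.pot_le S hne hpot⟩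

/-- When the `t`-th request of `C` is served, `x` holds potential at least
`t * D (Ws (j + 1)) x - 2 * ∑ i ∈ C, d x (v i)`, and potentials stay below caching costs. -/
theorem IsExecution.sum_D_le_mul_harmonic {n : ℕ} {Ws : ℕ → Finset X}
    (h : S.IsExecution n v Ws) {C : Finset ℕ} (hC : C ⊆ range n) (x : X) :
    ∑ j ∈ C, S.D (Ws (j + 1)) x ≤ (S.f x + 2 * ∑ i ∈ C, S.d x (v i)) * harmonic #C := by
  refine sum_le_mul_harmonic C _ _ fun j hj => ?_
  obtain ⟨hne, hpot⟩ := h.nonempty_and_pot_le S (mem_range.1 (hC hj))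
  have hprefix : {i ∈ C | i ≤ j} ⊆ range (j + 1) := fun i hi =>
    mem_range.2 (Nat.lt_succ_of_le (mem_filter.1 hi).2)
  have hsub : ∑ i ∈ C with i ≤ j, S.d x (v i) ≤ ∑ i ∈ C, S.d x (v i) :=
    sum_le_sum_of_subset_of_nonneg (filter_subset _ _) fun i _ _ => S.d_nonneg x (v i)
  linarith [S.card_mul_D_sub_le_pot v hne hprefix x, hpot x]

theorem IsExecution.sum_D_le_of_mapsTo {n : ℕ} {Ws : ℕ → Finset X}
    (h : S.IsExecution n v Ws) {Wstar : Finset X} {c : ℕ → X}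
    (hc : ∀ j ∈ range n, c j ∈ Wstar) :
    ∑ j ∈ range n, S.D (Ws (j + 1)) (v j) ≤
      Real.logb 2 ((n : ℝ) + 1) * ∑ w ∈ Wstar, S.f w +
        (2 * Real.logb 2 ((n : ℝ) + 1) + 1) * ∑ j ∈ range n, S.d (c j) (v j) := by
  set L := Real.logb 2 ((n : ℝ) + 1)
  have hcluster : ∀ x ∈ Wstar, ∑ j ∈ range n with c j = x, S.D (Ws (j + 1)) (c j) ≤
      L * (S.f x + 2 * ∑ j ∈ range n with c j = x, S.d (c j) (v j)) := fun x _ => by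
    set C := {j ∈ range n | c j = x}
    have hcx : ∀ j ∈ C, c j = x := fun j hj => (mem_filter.1 hj).2
    have hD : ∑ j ∈ C, S.D (Ws (j + 1)) (c j) = ∑ j ∈ C, S.D (Ws (j + 1)) x :=
      sum_congr rfl fun j hj => by rw [hcx j hj]
    have hd : ∑ j ∈ C, S.d (c j) (v j) = ∑ j ∈ C, S.d x (v j) :=
      sum_congr rfl fun j hj => by rw [hcx j hj]
    have hH : (harmonic #C : ℝ) ≤ L := (harmonic_le_logb_two #C).trans <|
      Real.logb_le_logb_of_le one_lt_two (by positivity) <| by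
        gcongr; exact (card_filter_le _ _).trans (card_range n).le
    have hK : 0 ≤ S.f x + 2 * ∑ j ∈ C, S.d x (v j) :=
      add_nonneg (S.f_nonneg x) (mul_nonneg zero_le_two (sum_nonneg fun j _ => S.d_nonneg _ _))
    rw [hD, hd, mul_comm]
    exact (h.sum_D_le_mul_harmonic S (filter_subset _ _) x).trans (mul_le_mul_of_nonneg_left hH hK)
  have hcenters : ∑ j ∈ range n, S.D (Ws (j + 1)) (c j) ≤
      L * ∑ w ∈ Wstar, S.f w + 2 * L * ∑ j ∈ range n, S.d (c j) (v j) := by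
    rw [← sum_fiberwise_of_maps_to hc, ← sum_fiberwise_of_maps_to hc, mul_sum, mul_sum,
      ← sum_add_distrib]
    refine sum_le_sum fun x hx => (hcluster x hx).trans_eq (by ring)
  have htriangle : ∀ j ∈ range n,
      S.D (Ws (j + 1)) (v j) ≤ S.D (Ws (j + 1)) (c j) + S.d (c j) (v j) := fun j hj =>
    S.D_le_D_add_d (h.nonempty_and_pot_le S (mem_range.1 hj)).1 _ _
  calc ∑ j ∈ range n, S.D (Ws (j + 1)) (v j)
      ≤ ∑ j ∈ range n, (S.D (Ws (j + 1)) (c j) + S.d (c j) (v j)) := sum_le_sum htriangle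
    _ = ∑ j ∈ range n, S.D (Ws (j + 1)) (c j) + ∑ j ∈ range n, S.d (c j) (v j) :=
        sum_add_distrib
    _ ≤ _ := by linarith

end Execution

end CachingSetting

theorem caching_UA_cost_bound_general {X : Type*} [Fintype X] [DecidableEq X]
    (S : CachingSetting X) (n : ℕ) (v : ℕ → X) (Ws : ℕ → Finset X)
    (hexec : S.IsExecution n v Ws)
    (Wstar : Finset X) (hr : S.r ∈ Wstar) :
    ∑ j ∈ Finset.range n, S.D (Ws (j + 1)) (v j) ≤
      Real.logb 2 ((n : ℝ) + 1) * ∑ w ∈ Wstar, S.f w +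
        (2 * Real.logb 2 ((n : ℝ) + 1) + 1) * ∑ j ∈ Finset.range n, S.D Wstar (v j) := by
  choose c hc hcd using fun j => S.exists_mem_d_eq_D ⟨S.r, hr⟩ (v j)
  simpa only [hcd] using hexec.sum_D_le_of_mapsTo S fun j _ => hc j

/-- Lemma 2 of the paper: in every execution of the online collaborative caching
algorithm on requests `v 0, …, v (n-1)` (`n ≥ 1`) and for every offline cache set
`W*` containing the root, the total UA cost paid by the algorithm satisfies
`∑_j d(W_{v_j}, v_j) ≤ log₂(n+1) · ∑_{w ∈ W*} f w + (2 log₂(n+1) + 1) · ∑_j d(W*, v_j)`,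
where `W_{v_j} = Ws (j+1)` is the cache set at the time request `v j` is assigned. -/
theorem caching_UA_cost_bound {X : Type*} [Fintype X] [DecidableEq X]
    (S : CachingSetting X) (n : ℕ) (hn : 1 ≤ n) (v : ℕ → X) (Ws : ℕ → Finset X)
    (hexec : S.IsExecution n v Ws)
    (Wstar : Finset X) (hr : S.r ∈ Wstar) :
    ∑ j ∈ Finset.range n, S.D (Ws (j + 1)) (v j) ≤
      Real.logb 2 ((n : ℝ) + 1) * ∑ w ∈ Wstar, S.f w +
        (2 * Real.logb 2 ((n : ℝ) + 1) + 1) * ∑ j ∈ Finset.range n, S.D Wstar (v j) :=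
  caching_UA_cost_bound_general S n v Ws hexec Wstar hr
end

section
/- In every execution of the online collaborative caching algorithm on a request multiset V, if W is the final cache set after all requests in V have been processed, then Σ_{v∈V} ĉ(v) = Σ_{v∈V} d(W,v) + Σ_{w∈W, w≠r} f_w, where for each request v the credit ĉ(v) equals f_w − p(w) + d(w,v) if v caused the content to be cached at a new node w (with p the potentials just before v arrived), and ĉ(v) = d(W_v, v) otherwise, W_v being the cache set when v was processed. -/
open Finset

namespace CachingSetting

variable {X : Type*} [Fintype X] [DecidableEq X] (S : CachingSetting X)

/-- One step of the online algorithm on request `v i`, together with the credit `c`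
assigned to the request: `c = f w − p(w) + d(w, v i)` if the request causes the
content to be cached at a new node `w` (with `p` the potentials just before the
request arrived), and `c = d(W, v i)` otherwise (`W` then being the cache set when
the request is processed). -/
def StepWithCredit (v : ℕ → X) (i : ℕ) (W W' : Finset X) (c : ℝ) : Prop :=
  ((∀ k, S.pot v W (i + 1) k ≤ S.f k) ∧ W' = W ∧ c = S.D W (v i)) ∨
    (∃ w, (∀ k, S.pot v W (i + 1) k - S.f k ≤ S.pot v W (i + 1) w - S.f w) ∧
      S.f w < S.pot v W (i + 1) w ∧ W' = insert w W ∧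
      c = S.f w - S.pot v W i w + S.d w (v i))

/-- `IsExecutionWithCredits S n v Ws c` says that `Ws j` is the cache set maintained
by the online algorithm after fully processing the first `j` of the `n` requests
`v 0, v 1, …` (initially `{r}`), and `c i` is the credit of request `v i`; ties may
be broken arbitrarily. -/
def IsExecutionWithCredits (n : ℕ) (v : ℕ → X) (Ws : ℕ → Finset X) (c : ℕ → ℝ) : Prop :=
  Ws 0 = {S.r} ∧ ∀ i < n, S.StepWithCredit v i (Ws i) (Ws (i + 1)) (c i)

end CachingSetting


section CreditAux

open CachingSetting

private lemma cc_max_identity (a e c : ℝ) :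
    max (min e a - c) 0 = max (max (a - c) 0 - max (a - e) 0) 0 := by
  simp only [max_def, min_def]
  split_ifs <;> linarith

private lemma cc_min_eq (a e : ℝ) : min e a = a - max (a - e) 0 := by
  simp only [max_def, min_def]
  split_ifs <;> linarith

private lemma cc_max_split (x y : ℝ) : max (x - y) 0 = x - y + max (y - x) 0 := by
  simp only [max_def]
  split_ifs <;> linarith

variable {X : Type*} [Fintype X] [DecidableEq X] (S : CachingSetting X)

private lemma cc_D_eq {W : Finset X} (h : W.Nonempty) (v : X) :
    S.D W v = W.inf' h (fun k => S.d k v) := by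
  simp [CachingSetting.D, h]

private lemma cc_D_le {W : Finset X} {k : X} (hk : k ∈ W) (v : X) :
    S.D W v ≤ S.d k v := by
  rw [cc_D_eq S ⟨k, hk⟩]
  exact Finset.inf'_le _ hk

private lemma cc_D_insert {W : Finset X} (h : W.Nonempty) (w v : X) :
    S.D (insert w W) v = min (S.d w v) (S.D W v) := by
  rw [cc_D_eq S (Finset.insert_nonempty w W), cc_D_eq S h, Finset.inf'_insert]

private lemma cc_pot_succ (v : ℕ → X) (W : Finset X) (j : ℕ) (k : X) :
    S.pot v W (j + 1) k = S.pot v W j k + max (S.D W (v j) - S.d k (v j)) 0 := by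
  simp [CachingSetting.pot, Finset.sum_range_succ]

private lemma cc_pot_insert {W : Finset X} (h : W.Nonempty) (v : ℕ → X) (m : ℕ) (w k : X) :
    S.pot v (insert w W) m k =
      ∑ i ∈ Finset.range m,
        max (max (S.D W (v i) - S.d k (v i)) 0 - max (S.D W (v i) - S.d w (v i)) 0) 0 := by
  unfold CachingSetting.pot
  refine Finset.sum_congr rfl fun i _ => ?_
  rw [cc_D_insert S h, cc_min_eq]
  have := cc_max_identity (S.D W (v i)) (S.d w (v i)) (S.d k (v i))
  rw [cc_min_eq] at this
  convert this using 3

private lemma cc_root_mem {n : ℕ} {v : ℕ → X} {Ws : ℕ → Finset X} {c : ℕ → ℝ}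
    (hexec : S.IsExecutionWithCredits n v Ws c) :
    ∀ j, j ≤ n → S.r ∈ Ws j := by
  intro j
  induction j with
  | zero => intro _; rw [hexec.1]; exact Finset.mem_singleton_self _
  | succ j ih =>
    intro hj
    have hmem := ih (Nat.le_of_succ_le hj)
    rcases hexec.2 j (Nat.lt_of_succ_le hj) with ⟨_, hW, _⟩ | ⟨w, _, _, hW, _⟩
    · rw [hW]; exact hmem
    · rw [hW]; exact Finset.mem_insert_of_mem hmem

private lemma cc_invariant {n : ℕ} {v : ℕ → X} {Ws : ℕ → Finset X} {c : ℕ → ℝ}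
    (hexec : S.IsExecutionWithCredits n v Ws c) :
    ∀ j, j ≤ n → ∀ k, S.pot v (Ws j) j k ≤ S.f k := by
  intro j
  induction j with
  | zero => intro _ k; simp [CachingSetting.pot]; exact S.f_nonneg k
  | succ j ih =>
    intro hj k
    have hjn : j ≤ n := Nat.le_of_succ_le hj
    have ihj := ih hjn
    have hne : (Ws j).Nonempty := ⟨S.r, cc_root_mem S hexec j hjn⟩
    rcases hexec.2 j (Nat.lt_of_succ_le hj) with ⟨hpot, hW, _⟩ | ⟨w, hmax, hfw, hW, _⟩
    · rw [hW]; exact hpot k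
    · rw [hW, cc_pot_insert S hne]
      set A : ℕ → ℝ := fun i => max (S.D (Ws j) (v i) - S.d k (v i)) 0 with hA
      set E : ℕ → ℝ := fun i => max (S.D (Ws j) (v i) - S.d w (v i)) 0 with hE
      have hA0 : ∀ i, 0 ≤ A i := fun i => le_max_right _ _
      have hE0 : ∀ i, 0 ≤ E i := fun i => le_max_right _ _
      have hSAk : ∑ i ∈ Finset.range j, A i ≤ S.f k := ihj k
      have hSEw : ∑ i ∈ Finset.range j, E i ≤ S.f w := ihj w
      have hmaxk : S.pot v (Ws j) (j + 1) k - S.f k ≤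
          S.pot v (Ws j) (j + 1) w - S.f w := hmax k
      have hpk : S.pot v (Ws j) (j + 1) k = (∑ i ∈ Finset.range j, A i) + A j := by
        rw [cc_pot_succ]; rfl
      have hpw : S.pot v (Ws j) (j + 1) w = (∑ i ∈ Finset.range j, E i) + E j := by
        rw [cc_pot_succ]; rfl
      rw [Finset.sum_range_succ]
      have hSU_eq : ∑ i ∈ Finset.range j, max (A i - E i) 0 =
          (∑ i ∈ Finset.range j, A i) - (∑ i ∈ Finset.range j, E i)
            + ∑ i ∈ Finset.range j, max (E i - A i) 0 := by
        rw [← Finset.sum_sub_distrib, ← Finset.sum_add_distrib]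
        exact Finset.sum_congr rfl fun i _ => cc_max_split (A i) (E i)
      have hSM_le : ∑ i ∈ Finset.range j, max (E i - A i) 0 ≤
          ∑ i ∈ Finset.range j, E i :=
        Finset.sum_le_sum fun i _ => max_le (by linarith [hA0 i]) (hE0 i)
      have hSU_le : ∑ i ∈ Finset.range j, max (A i - E i) 0 ≤
          ∑ i ∈ Finset.range j, A i :=
        Finset.sum_le_sum fun i _ => max_le (by linarith [hE0 i]) (hA0 i)
      rcases le_total (A j) (E j) with hje | hje
      · rw [max_eq_right (by linarith)]
        linarith
      · rw [max_eq_left (by linarith)]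
        linarith

end CreditAux


/-- The potential-function identity inside the proof of Lemma 4: in every execution
of the online algorithm on requests `v 0, …, v (n-1)` with credits `c`, if `W = Ws n`
is the final cache set then
`∑_{v ∈ V} ĉ(v) = ∑_{v ∈ V} d(W, v) + ∑_{w ∈ W, w ≠ r} f w`. -/
theorem caching_credit_identity {X : Type*} [Fintype X] [DecidableEq X]
    (S : CachingSetting X) (n : ℕ) (v : ℕ → X) (Ws : ℕ → Finset X) (c : ℕ → ℝ)
    (hexec : S.IsExecutionWithCredits n v Ws c) :
    ∑ i ∈ Finset.range n, c i =
      ∑ i ∈ Finset.range n, S.D (Ws n) (v i) + ∑ w ∈ (Ws n).erase S.r, S.f w := by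
  set Φ : ℕ → ℝ := fun j =>
    ∑ i ∈ Finset.range j, S.D (Ws j) (v i) + ∑ w ∈ (Ws j).erase S.r, S.f w with hΦ
  have hstep : ∀ j < n, c j = Φ (j + 1) - Φ j := by
    intro j hj
    have hjn : j ≤ n := le_of_lt hj
    have hr : S.r ∈ Ws j := cc_root_mem S hexec j hjn
    have hne : (Ws j).Nonempty := ⟨S.r, hr⟩
    rcases hexec.2 j hj with ⟨_, hW, hc⟩ | ⟨w, hmax, hfw, hW, hc⟩
    · simp only [hΦ, hW, Finset.sum_range_succ]
      rw [hc]; ring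
    · -- the request causes caching at w
      have hinv := cc_invariant S hexec j hjn
      have hwa : S.d w (v j) < S.D (Ws j) (v j) := by
        by_contra hcon
        push_neg at hcon
        rw [cc_pot_succ, max_eq_right (by linarith)] at hfw
        linarith [hinv w]
      have hwnot : w ∉ Ws j := by
        intro hwin
        have hz : S.pot v (Ws j) (j + 1) w = 0 := by
          unfold CachingSetting.pot
          exact Finset.sum_eq_zero fun i _ =>
            max_eq_right (by linarith [cc_D_le S hwin (v i)])
        rw [hz] at hfw
        linarith [S.f_nonneg w]
      have hwr : w ≠ S.r := fun h => hwnot (h ▸ hr)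
      have herase : (insert w (Ws j)).erase S.r = insert w ((Ws j).erase S.r) :=
        Finset.erase_insert_of_ne hwr
      have hwnot' : w ∉ (Ws j).erase S.r := fun h => hwnot (Finset.mem_of_mem_erase h)
      have hsumf : ∑ x ∈ (insert w (Ws j)).erase S.r, S.f x =
          S.f w + ∑ x ∈ (Ws j).erase S.r, S.f x := by
        rw [herase, Finset.sum_insert hwnot']
      have hDins : ∀ i, S.D (insert w (Ws j)) (v i) =
          S.D (Ws j) (v i) - max (S.D (Ws j) (v i) - S.d w (v i)) 0 := by
        intro i
        rw [cc_D_insert S hne, cc_min_eq]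
      have hDsum : ∑ i ∈ Finset.range (j + 1), S.D (insert w (Ws j)) (v i) =
          (∑ i ∈ Finset.range j, S.D (Ws j) (v i)) - S.pot v (Ws j) j w
            + S.d w (v j) := by
        rw [Finset.sum_range_succ]
        have h1 : ∑ i ∈ Finset.range j, S.D (insert w (Ws j)) (v i) =
            (∑ i ∈ Finset.range j, S.D (Ws j) (v i)) - S.pot v (Ws j) j w := by
          unfold CachingSetting.pot
          rw [← Finset.sum_sub_distrib]
          exact Finset.sum_congr rfl fun i _ => hDins i
        have h2 : S.D (insert w (Ws j)) (v j) = S.d w (v j) := by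
          rw [cc_D_insert S hne, min_eq_left (le_of_lt hwa)]
        rw [h1, h2]
      simp only [hΦ, hW]
      rw [hDsum, hsumf, hc]
      ring
  have htel : ∑ i ∈ Finset.range n, c i = Φ n - Φ 0 := by
    calc ∑ i ∈ Finset.range n, c i
        = ∑ i ∈ Finset.range n, (Φ (i + 1) - Φ i) :=
          Finset.sum_congr rfl fun i hi => hstep i (Finset.mem_range.mp hi)
      _ = Φ n - Φ 0 := Finset.sum_range_sub Φ n
  have hΦ0 : Φ 0 = 0 := by
    simp [hΦ, hexec.1]
  rw [htel, hΦ0, hΦ]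
  ring
end

section
/- Let (X,d) be a pseudometric space, let V be a finite multiset of points of X (the requests), let r ∈ X, and let each point k of a finite set of candidate caches have nonnegative cost f_k with f_r = 0. Suppose W ⊆ X is a finite set containing r such that for some element c ∈ X with cost f_c the inequality Σ_{v∈V} max(d(W,v) − d(c,v), 0) ≤ f_c holds, and suppose every request v ∈ V is served at cost d(W,v) := min_{k∈W} d(k,v). Then for every finite multiset C ⊆ V, |C| · d(W,c) ≤ f_c + 2·Σ_{v∈C} d(c,v). -/
/-- Specialization of Corollary 1 to clusters `C` consisting only of already-processed
requests, i.e. `C ≤ V` as multisets.  `(X, dist)` is a pseudometric space, the finitely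
many candidate caches carry nonnegative costs `f` with `f r = 0` for the root `r`,
`W` is a finite cache set containing `r`, `V` is the multiset of requests, each served
at cost `d(W,v) = min_{k ∈ W} dist k v`, and `c` is a cache satisfying the potential
invariant.  Then for every multiset `C ≤ V`,
`|C| · d(W,c) ≤ f c + 2 · ∑_{v ∈ C} d(c,v)`. -/
theorem caching_corollary1_subset {X : Type*} [PseudoMetricSpace X] [Fintype X]
    (f : X → ℝ) (hf : ∀ k, 0 ≤ f k) (r : X) (hfr : f r = 0)
    (W : Finset X) (hrW : r ∈ W) (V : Multiset X) (c : X)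
    (hpot : (V.map fun v =>
        max (W.inf' ⟨r, hrW⟩ (fun k => dist k v) - dist c v) 0).sum ≤ f c) :
    ∀ C : Multiset X, C ≤ V →
      (C.card : ℝ) * W.inf' ⟨r, hrW⟩ (fun k => dist k c) ≤
        f c + 2 * (C.map fun v => dist c v).sum := by
  intro C hC
  set g : X → ℝ := fun v => max (W.inf' ⟨r, hrW⟩ (fun k => dist k v) - dist c v) 0 with hg
  -- pointwise: d(W,c) ≤ g v + 2 * dist c v
  have key : ∀ v : X, W.inf' ⟨r, hrW⟩ (fun k => dist k c) ≤ g v + 2 * dist c v := by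
    intro v
    obtain ⟨k, hkW, hk⟩ := W.exists_mem_eq_inf' ⟨r, hrW⟩ (fun k => dist k v)
    have h1 : W.inf' ⟨r, hrW⟩ (fun k => dist k c) ≤ dist k c :=
      Finset.inf'_le _ hkW
    have h2 : dist k c ≤ dist k v + dist v c := dist_triangle k v c
    have h3 : dist k v - dist c v ≤ g v := by
      rw [hg, ← hk]; exact le_max_left _ _
    have : dist v c = dist c v := dist_comm v c
    linarith
  -- sum over C
  have hsum : ∀ S : Multiset X, (S.card : ℝ) * W.inf' ⟨r, hrW⟩ (fun k => dist k c) ≤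
      (S.map g).sum + 2 * (S.map fun v => dist c v).sum := by
    intro S
    induction S using Multiset.induction with
    | empty => simp
    | cons a s ih =>
      simp only [Multiset.card_cons, Multiset.map_cons, Multiset.sum_cons, Nat.cast_add,
        Nat.cast_one]
      have := key a
      linarith [ih]
  have hsum := hsum C
  -- (C.map g).sum ≤ (V.map g).sum ≤ f c
  obtain ⟨D, rfl⟩ := Multiset.le_iff_exists_add.mp hC
  have hD : 0 ≤ (D.map g).sum := by
    apply Multiset.sum_nonneg
    intro x hx
    obtain ⟨v, _, rfl⟩ := Multiset.mem_map.mp hx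
    exact le_max_right _ _
  rw [Multiset.map_add, Multiset.sum_add] at hpot
  linarith
end
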